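/- arXiv:1401.1095 — 2 statements merged into one kernel-verified Lean document; each statement's English description precedes it below -/
import Mathlib

section
/- Fix b > 0, h > 0 and θ ∈ [0, π/2). For a ≥ b let ε(a) = √(1 − b²/a²). Then the lower Rayleigh-conductivity bound LB(a) = π·a·b / ( h/cos²θ + (16b/(3π))·K(ε(a))/K(0) ) tends to +∞ as a → +∞; i.e., as the elliptical opening degenerates into an infinite slit of finite width 2b, the Rayleigh conductivity bounds tend to infinity. -/
/-!
Bounding the radicand `1 - ε² sin² φ` from below by `cos² φ` away from `π / 2` and by
`c² = 1 - ε²` near `π / 2`, with the splitting point at distance `√c` from `π / 2`, gives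
`K(ε) ≤ (π² / 4 + 1) / √c`. For `ε = ε(a)` we have `c = b / a`, so `K(ε(a)) = O(√a)`, the
denominator of `LB(a)` is `O(√a)` (and positive, as `K ≥ π / 2`), while the numerator grows
linearly in `a`: hence `LB(a) ≳ √a`.
-/

open Real MeasureTheory Filter

noncomputable def Kell (ε : ℝ) : ℝ :=
  ∫ φ in (0:ℝ)..(π/2), (Real.sqrt (1 - ε ^ 2 * Real.sin φ ^ 2))⁻¹

noncomputable def Eell (ε : ℝ) : ℝ :=
  ∫ φ in (0:ℝ)..(π/2), Real.sqrt (1 - ε ^ 2 * Real.sin φ ^ 2)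

noncomputable def Dell (ε : ℝ) : ℝ :=
  ∫ φ in (0:ℝ)..(π/2), Real.sin φ ^ 2 * (Real.sqrt (1 - ε ^ 2 * Real.sin φ ^ 2))⁻¹

lemma inv_sqrt_le_inv_of_sq_le {m y : ℝ} (hm : 0 < m) (h : m ^ 2 ≤ y) : (√y)⁻¹ ≤ m⁻¹ :=
  inv_anti₀ hm ((Real.le_sqrt' hm).2 h)

lemma cos_sq_add_sq_mul_sin_sq_le {c ε : ℝ} (hε : ε ^ 2 ≤ 1 - c ^ 2) (x : ℝ) :
    cos x ^ 2 + c ^ 2 * sin x ^ 2 ≤ 1 - ε ^ 2 * sin x ^ 2 := by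
  nlinarith [sin_sq_add_cos_sq x, sq_nonneg (sin x)]

lemma continuous_inv_sqrt_one_sub_sq_mul_sin_sq {ε : ℝ} (hε : ε ^ 2 < 1) :
    Continuous fun φ => (√(1 - ε ^ 2 * sin φ ^ 2))⁻¹ := by
  refine (continuous_const.sub (continuous_const.mul (continuous_sin.pow 2))).sqrt.inv₀ ?_
  intro x
  have : 0 < 1 - ε ^ 2 * sin x ^ 2 := by nlinarith [sin_sq_le_one x, sq_nonneg ε]
  exact (Real.sqrt_pos.2 this).ne'

lemma pi_div_two_le_kell {ε : ℝ} (hε : ε ^ 2 < 1) : π / 2 ≤ Kell ε := by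
  have hf := (continuous_inv_sqrt_one_sub_sq_mul_sin_sq hε).intervalIntegrable
    (μ := volume) 0 (π / 2)
  calc π / 2 = ∫ _ in (0:ℝ)..(π / 2), (1 : ℝ) := by simp
    _ ≤ Kell ε := by
      refine intervalIntegral.integral_mono_on (by positivity) intervalIntegrable_const hf
        fun x _ => ?_
      have h0 : 0 < 1 - ε ^ 2 * sin x ^ 2 := by nlinarith [sin_sq_le_one x, sq_nonneg ε]
      have h1 : √(1 - ε ^ 2 * sin x ^ 2) ≤ 1 :=
        Real.sqrt_le_one.2 (by nlinarith [sq_nonneg ε, sq_nonneg (sin x)])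
      exact one_le_inv₀ (Real.sqrt_pos.2 h0) |>.2 h1

lemma kell_zero : Kell 0 = π / 2 := by
  simp [Kell]

lemma kell_le_of_sq_le_one_sub_sq {c ε : ℝ} (hc : 0 < c) (hε : ε ^ 2 ≤ 1 - c ^ 2) :
    Kell ε ≤ (π ^ 2 / 4 + 1) / √c := by
  set δ := √c
  have hδ : 0 < δ := Real.sqrt_pos.2 hc
  have hδc : δ ^ 2 = c := Real.sq_sqrt hc.le
  have hc1 : c ≤ 1 := by nlinarith [sq_nonneg ε]
  have hδ1 : δ ≤ 1 := Real.sqrt_le_one.2 hc1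
  have hπ : 3 < π := pi_gt_three
  have hrad := cos_sq_add_sq_mul_sin_sq_le hε
  have hf := continuous_inv_sqrt_one_sub_sq_mul_sin_sq (ε := ε) (by nlinarith)
  -- Away from `π / 2` the radicand is at least `cos² φ`, near `π / 2` it is at least `c²`.
  have h_far : ∀ x ∈ Set.Icc 0 (π / 2 - δ), (√(1 - ε ^ 2 * sin x ^ 2))⁻¹ ≤ π / (2 * δ) := by
    rintro x ⟨hx0, hx1⟩
    have hcos : 2 / π * δ ≤ cos x :=
      calc 2 / π * δ = 1 - 2 / π * (π / 2 - δ) := by field_simp; ring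
        _ ≤ 1 - 2 / π * x := by gcongr
        _ ≤ cos x := one_sub_mul_le_cos hx0 (by linarith)
    have hcos_sq := pow_le_pow_left₀ (by positivity) hcos 2
    calc (√(1 - ε ^ 2 * sin x ^ 2))⁻¹ ≤ (2 / π * δ)⁻¹ :=
          inv_sqrt_le_inv_of_sq_le (by positivity) (by nlinarith [hrad x, sq_nonneg (c * sin x)])
      _ = π / (2 * δ) := by field_simp
  have h_near : ∀ x, (√(1 - ε ^ 2 * sin x ^ 2))⁻¹ ≤ c⁻¹ := fun x =>
    inv_sqrt_le_inv_of_sq_le hc (by nlinarith [hrad x, sin_sq_add_cos_sq x, sq_nonneg (cos x)])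
  calc Kell ε = (∫ φ in (0:ℝ)..(π / 2 - δ), (√(1 - ε ^ 2 * sin φ ^ 2))⁻¹) +
        ∫ φ in (π / 2 - δ)..(π / 2), (√(1 - ε ^ 2 * sin φ ^ 2))⁻¹ :=
        (intervalIntegral.integral_add_adjacent_intervals (hf.intervalIntegrable _ _)
          (hf.intervalIntegrable _ _)).symm
    _ ≤ (∫ _ in (0:ℝ)..(π / 2 - δ), π / (2 * δ)) + ∫ _ in (π / 2 - δ)..(π / 2), c⁻¹ := by
        gcongr
        · exact intervalIntegral.integral_mono_on (by linarith) (hf.intervalIntegrable _ _)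
            intervalIntegrable_const h_far
        · exact intervalIntegral.integral_mono_on (by linarith) (hf.intervalIntegrable _ _)
            intervalIntegrable_const fun x _ => h_near x
    _ ≤ π / 2 * (π / (2 * δ)) + δ * c⁻¹ := by
        simp only [intervalIntegral.integral_const, smul_eq_mul]
        gcongr <;> linarith
    _ = (π ^ 2 / 4 + 1) / δ := by
        rw [← hδc]
        field_simp
        ring

lemma sq_sqrt_one_sub_sq_div_sq {a b : ℝ} (hb : 0 ≤ b) (hba : b ≤ a) :
    √(1 - b ^ 2 / a ^ 2) ^ 2 = 1 - (b / a) ^ 2 := by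
  have h : (b / a) ^ 2 ≤ 1 :=
    pow_le_one₀ (div_nonneg hb (hb.trans hba)) (div_le_one_of_le₀ hba (hb.trans hba))
  rw [Real.sq_sqrt (by rw [← div_pow]; linarith), div_pow]

lemma kell_sqrt_one_sub_sq_div_sq_le {a b : ℝ} (hb : 0 < b) (hba : b ≤ a) :
    Kell √(1 - b ^ 2 / a ^ 2) ≤ (π ^ 2 / 4 + 1) * √a / √b := by
  have ha : 0 < a := hb.trans_le hba
  calc Kell √(1 - b ^ 2 / a ^ 2) ≤ (π ^ 2 / 4 + 1) / √(b / a) :=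
        kell_le_of_sq_le_one_sub_sq (div_pos hb ha) (sq_sqrt_one_sub_sq_div_sq hb.le hba).le
    _ = (π ^ 2 / 4 + 1) * √a / √b := by
        rw [Real.sqrt_div hb.le, div_div_eq_mul_div]

lemma lower_bound_denominator_pos {a b D : ℝ} (hb : 0 < b) (hD : 0 ≤ D) (hba : b ≤ a) :
    0 < D + 16 * b / (3 * π) * (Kell √(1 - b ^ 2 / a ^ 2) / Kell 0) := by
  have hK : π / 2 ≤ Kell √(1 - b ^ 2 / a ^ 2) := by
    refine pi_div_two_le_kell ?_
    rw [sq_sqrt_one_sub_sq_div_sq hb.le hba]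
    exact sub_lt_self 1 (pow_pos (div_pos hb (hb.trans_le hba)) 2)
  rw [kell_zero]
  exact add_pos_of_nonneg_of_pos hD
    (mul_pos (by positivity) (div_pos (by linarith [pi_pos]) (by positivity)))

lemma lower_bound_denominator_le {a b D : ℝ} (hb : 0 < b) (hD : 0 ≤ D) (hba : b ≤ a)
    (ha : 1 ≤ a) :
    D + 16 * b / (3 * π) * (Kell √(1 - b ^ 2 / a ^ 2) / Kell 0) ≤
      (D + 16 * b / (3 * π) * ((π ^ 2 / 4 + 1) / √b) / (π / 2)) * √a := by
  have hD_le : D ≤ D * √a := le_mul_of_one_le_right hD (Real.one_le_sqrt.2 ha)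
  have hK_le := kell_sqrt_one_sub_sq_div_sq_le hb hba
  have hK_term : 16 * b / (3 * π) * (Kell √(1 - b ^ 2 / a ^ 2) / Kell 0) ≤
      16 * b / (3 * π) * ((π ^ 2 / 4 + 1) / √b) / (π / 2) * √a :=
    calc 16 * b / (3 * π) * (Kell √(1 - b ^ 2 / a ^ 2) / Kell 0)
        ≤ 16 * b / (3 * π) * ((π ^ 2 / 4 + 1) * √a / √b / (π / 2)) := by
          rw [kell_zero]; gcongr
      _ = 16 * b / (3 * π) * ((π ^ 2 / 4 + 1) / √b) / (π / 2) * √a := by ring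
  linarith

lemma div_mul_sqrt_le_mul_div {N A d a : ℝ} (hN : 0 ≤ N) (hA : 0 < A) (ha : 0 < a)
    (hd : 0 < d) (hdA : d ≤ A * √a) : N / A * √a ≤ N * a / d :=
  calc N / A * √a = N * a / (A * √a) := by
        have hsqrt_a : √a ≠ 0 := by positivity
        field_simp
        rw [Real.sq_sqrt ha.le]
    _ ≤ N * a / d := div_le_div_of_nonneg_left (by positivity) hd hdA

theorem lower_bound_tendsto_atTop_general
    (b h θ : ℝ) (hb : 0 < b) (hh : 0 < h) :
    Tendsto (fun a : ℝ =>
        π * a * b / (h / Real.cos θ ^ 2 +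
          (16 * b / (3 * π)) * (Kell (Real.sqrt (1 - b ^ 2 / a ^ 2)) / Kell 0)))
      atTop atTop := by
  set D := h / cos θ ^ 2
  set M := 16 * b / (3 * π) * ((π ^ 2 / 4 + 1) / √b) / (π / 2)
  have hD : 0 ≤ D := by positivity
  refine tendsto_atTop_mono' atTop ?_
    (tendsto_sqrt_atTop.const_mul_atTop (r := π * b / (D + M)) (by positivity))
  filter_upwards [eventually_ge_atTop (max b 1)] with a ha
  obtain ⟨hba, ha1⟩ := max_le_iff.1 ha
  rw [mul_right_comm π a b]
  exact div_mul_sqrt_le_mul_div (by positivity) (by positivity) (by linarith)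
    (lower_bound_denominator_pos hb hD hba) (lower_bound_denominator_le hb hD hba ha1)

/-- As the semi-major axis `a` tends to infinity (the opening degenerates into an
infinite slit of width `2b`), the lower Rayleigh conductivity bound tends to `+∞`. -/
theorem lower_bound_tendsto_atTop
    (b h θ : ℝ) (hb : 0 < b) (hh : 0 < h) (hθ0 : 0 ≤ θ) (hθ1 : θ < π / 2) :
    Tendsto (fun a : ℝ =>
        π * a * b / (h / Real.cos θ ^ 2 +
          (16 * b / (3 * π)) * (Kell (Real.sqrt (1 - b ^ 2 / a ^ 2)) / Kell 0)))
      atTop atTop :=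
  lower_bound_tendsto_atTop_general b h θ hb hh
end

section
/- Fix a > 0 and h > 0 and take the untilted case θ = 0. For 0 < b ≤ a let ε(b) = √(1 − b²/a²), LB(b) = πab / ( h + (16b/(3π))·K(ε(b))/K(0) ) and UB(b) = πab / ( h + (πb/2)·K(ε(b))/K(0) ). Then, as b → 0⁺, UB(b) → 0 and UB(b)/LB(b) → 1; i.e., when the elliptical perforation degenerates into a slit of zero width and finite length, the Rayleigh conductivity bounds tend to zero and the lower and upper bounds converge to each other. -/
/-!
Writing the modulus as `ε = √(1 - t²)` with `t = b / a`, the integrand of `K(ε)` becomes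
`(cos² φ + t² sin² φ)^(-1/2)`, and `t` times it is bounded by `1` and by `t / cos φ`. Dominated
convergence gives `t · K(ε) → 0`, i.e. `b · K(ε(b)) → 0`: the logarithmic blow-up of `K` is
beaten by the linear factor `b`. Both denominators therefore tend to `h`, so the upper bound
behaves like `π a b / h → 0`, and after cancelling `π a b` the ratio of the bounds is a
quotient of the two denominators, which tends to `h / h = 1`.
-/

open Real MeasureTheory Filter Topology

lemma Kell_sqrt_one_sub_sq {t : ℝ} (ht : t ^ 2 ≤ 1) :
    Kell (√(1 - t ^ 2)) = ∫ φ in (0:ℝ)..(π/2), (√(cos φ ^ 2 + t ^ 2 * sin φ ^ 2))⁻¹ := by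
  unfold Kell
  congr 1
  funext φ
  rw [sq_sqrt (by linarith)]
  congr 2
  linear_combination -sin_sq_add_cos_sq φ

lemma mul_inv_sqrt_cos_sq_add_sq_mul_sin_sq_le_one {t : ℝ} (ht₀ : 0 ≤ t) (ht₁ : t ≤ 1) (φ : ℝ) :
    t * (√(cos φ ^ 2 + t ^ 2 * sin φ ^ 2))⁻¹ ≤ 1 := by
  have hle : t ^ 2 ≤ cos φ ^ 2 + t ^ 2 * sin φ ^ 2 := by
    nlinarith [sin_sq_add_cos_sq φ,
      mul_nonneg (sub_nonneg.2 (pow_le_one₀ (n := 2) ht₀ ht₁)) (sq_nonneg (cos φ))]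
  have hsqrt : t ≤ √(cos φ ^ 2 + t ^ 2 * sin φ ^ 2) := le_sqrt_of_sq_le hle
  rw [← div_eq_mul_inv]
  exact div_le_one_of_le₀ hsqrt (sqrt_nonneg _)

lemma mul_inv_sqrt_cos_sq_add_sq_mul_sin_sq_le_div_cos {t φ : ℝ} (ht : 0 ≤ t) (hφ : 0 < cos φ) :
    t * (√(cos φ ^ 2 + t ^ 2 * sin φ ^ 2))⁻¹ ≤ t / cos φ := by
  have hcos : cos φ ≤ √(cos φ ^ 2 + t ^ 2 * sin φ ^ 2) :=
    le_sqrt_of_sq_le (le_add_of_nonneg_right (by positivity))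
  rw [div_eq_mul_inv]
  exact mul_le_mul_of_nonneg_left (inv_anti₀ hφ hcos) ht

lemma tendsto_mul_integral_inv_sqrt_cos_sq_add_sq_mul_sin_sq :
    Tendsto (fun t : ℝ => t * ∫ φ in (0:ℝ)..(π/2), (√(cos φ ^ 2 + t ^ 2 * sin φ ^ 2))⁻¹)
      (𝓝[>] 0) (𝓝 0) := by
  simp only [← intervalIntegral.integral_const_mul]
  rw [show 𝓝 (0 : ℝ) = 𝓝 (∫ _ in (0:ℝ)..(π/2), (0 : ℝ)) by simp]
  have hsmall : Set.Ioc (0 : ℝ) 1 ∈ 𝓝[>] 0 := Ioc_mem_nhdsGT zero_lt_one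
  refine intervalIntegral.tendsto_integral_filter_of_dominated_convergence (μ := volume)
    (l := 𝓝[>] (0 : ℝ))
    (F := fun t φ => t * (√(cos φ ^ 2 + t ^ 2 * sin φ ^ 2))⁻¹) (fun _ => 1)
    (Eventually.of_forall fun t => (by fun_prop : Measurable _).aestronglyMeasurable) ?_
    intervalIntegrable_const ?_
  · filter_upwards [hsmall] with t ht
    refine Eventually.of_forall fun φ _ => ?_
    rw [norm_of_nonneg (by have := ht.1; positivity)]
    exact mul_inv_sqrt_cos_sq_add_sq_mul_sin_sq_le_one ht.1.le ht.2 φ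
  -- at `φ = π / 2` the integrand is `t / |t| = 1`, so the convergence to `0` is only a.e.
  · filter_upwards [Measure.ae_ne volume (π / 2)] with φ hφ hφ_mem
    rw [Set.uIoc_of_le (by positivity)] at hφ_mem
    have hcos : 0 < cos φ :=
      cos_pos_of_mem_Ioo ⟨by linarith [hφ_mem.1, pi_pos], lt_of_le_of_ne hφ_mem.2 hφ⟩
    have hdiv : Tendsto (fun t : ℝ => t / cos φ) (𝓝[>] 0) (𝓝 0) := by
      simpa using ((continuous_id.div_const (cos φ)).tendsto 0).mono_left nhdsWithin_le_nhds
    refine squeeze_zero' ?_ ?_ hdiv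
    · filter_upwards [self_mem_nhdsWithin] with t (ht : 0 < t)
      positivity
    · filter_upwards [self_mem_nhdsWithin] with t (ht : 0 < t)
      exact mul_inv_sqrt_cos_sq_add_sq_mul_sin_sq_le_div_cos ht.le hcos

lemma tendsto_mul_Kell_sqrt_one_sub_sq :
    Tendsto (fun t : ℝ => t * Kell (√(1 - t ^ 2))) (𝓝[>] 0) (𝓝 0) := by
  refine tendsto_mul_integral_inv_sqrt_cos_sq_add_sq_mul_sin_sq.congr' ?_
  filter_upwards [Ioc_mem_nhdsGT zero_lt_one] with t ht
  rw [Kell_sqrt_one_sub_sq (by nlinarith [ht.1, ht.2])]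

lemma tendsto_mul_Kell_sqrt_one_sub_sq_div_sq {a : ℝ} (ha : 0 < a) :
    Tendsto (fun b : ℝ => b * Kell (√(1 - b ^ 2 / a ^ 2))) (𝓝[>] 0) (𝓝 0) := by
  have hdiv : Tendsto (fun b : ℝ => b / a) (𝓝[>] 0) (𝓝[>] 0) := by
    refine tendsto_nhdsWithin_of_tendsto_nhds_of_eventually_within _ ?_ ?_
    · simpa using ((continuous_id.div_const a).tendsto 0).mono_left nhdsWithin_le_nhds
    · filter_upwards [self_mem_nhdsWithin] with b (hb : 0 < b)
      exact div_pos hb ha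
  have := (tendsto_mul_Kell_sqrt_one_sub_sq.comp hdiv).const_mul a
  rw [mul_zero] at this
  refine this.congr fun b => ?_
  simp only [Function.comp_apply, div_pow]
  field_simp

/-- Untilted case `θ = 0`: as the semi-minor axis `b` tends to `0⁺` (the perforation
degenerates into a slit of zero width and finite length `2a`), the upper Rayleigh
conductivity bound tends to `0` and the ratio of upper to lower bound tends to `1`. -/
theorem slit_zero_width_limit
    (a h : ℝ) (ha : 0 < a) (hh : 0 < h) :
    Tendsto (fun b : ℝ =>
        π * a * b / (h + (π * b / 2) * (Kell (Real.sqrt (1 - b ^ 2 / a ^ 2)) / Kell 0)))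
      (𝓝[>] 0) (𝓝 0) ∧
    Tendsto (fun b : ℝ =>
        (π * a * b / (h + (π * b / 2) * (Kell (Real.sqrt (1 - b ^ 2 / a ^ 2)) / Kell 0))) /
        (π * a * b / (h + (16 * b / (3 * π)) * (Kell (Real.sqrt (1 - b ^ 2 / a ^ 2)) / Kell 0))))
      (𝓝[>] 0) (𝓝 1) := by
  set K : ℝ → ℝ := fun b => Kell (√(1 - b ^ 2 / a ^ 2))
  have hden : ∀ c : ℝ, Tendsto (fun b => h + c * b * (K b / Kell 0)) (𝓝[>] 0) (𝓝 h) := by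
    intro c
    have := tendsto_const_nhds (x := h) |>.add
      ((tendsto_mul_Kell_sqrt_one_sub_sq_div_sq ha).const_mul (c / Kell 0))
    rw [mul_zero, add_zero] at this
    exact this.congr fun b => by ring
  have hupper_den : Tendsto (fun b => h + π * b / 2 * (K b / Kell 0)) (𝓝[>] 0) (𝓝 h) :=
    (hden (π / 2)).congr fun b => by ring
  have hlower_den : Tendsto (fun b => h + 16 * b / (3 * π) * (K b / Kell 0)) (𝓝[>] 0) (𝓝 h) :=
    (hden (16 / (3 * π))).congr fun b => by ring
  have hnum : Tendsto (fun b : ℝ => π * a * b) (𝓝[>] 0) (𝓝 0) := by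
    simpa using ((continuous_const_mul (π * a)).tendsto 0).mono_left nhdsWithin_le_nhds
  constructor
  · have hupper := hnum.div hupper_den hh.ne'
    rwa [zero_div] at hupper
  · have hratio := hlower_den.div hupper_den hh.ne'
    rw [div_self hh.ne'] at hratio
    refine hratio.congr' ?_
    filter_upwards [self_mem_nhdsWithin] with b (hb : 0 < b)
    exact (div_div_div_cancel_left' _ _ (by positivity)).symm
end
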